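/- Let B be a 2×2 complex matrix with Σ_{i,j} |B_{ij}|² = 1. Then ( 2·|(Bᴴ B)_{01}| )² + ( 2·Σ_i |B_{ii}|² − 1 )² ≤ 1. -/

import Mathlib

open Matrix

/-!
Write `p, q, r, s` for the moduli of `B 0 0, B 0 1, B 1 0, B 1 1`, so that `p² + q² + r² + s² = 1`.
The triangle inequality gives `|(Bᴴ B)₀₁| ≤ pq + rs`, and Cauchy–Schwarz, pairing `(p, s)` with
`(q, r)`, gives `(pq + rs)² ≤ (p² + s²)(q² + r²) = P (1 - P)`. The claim is then the identity
`(2c)² + (2P - 1)² = 1 - 4 (P (1 - P) - c²)`.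
-/

theorem Matrix.norm_conjTranspose_mul_self_apply_le {n : Type*} [Fintype n]
    (B : Matrix n n ℂ) (i j : n) :
    ‖(Bᴴ * B) i j‖ ≤ ∑ k, ‖B k i‖ * ‖B k j‖ := by
  simp only [mul_apply, conjTranspose_apply]
  refine (norm_sum_le _ _).trans_eq (Finset.sum_congr rfl fun k _ => ?_)
  rw [norm_mul, norm_star]

theorem sq_mul_add_mul_le_mul (p q r s : ℝ) :
    (p * q + r * s) ^ 2 ≤ (p ^ 2 + s ^ 2) * (q ^ 2 + r ^ 2) := by
  nlinarith [sq_nonneg (p * r - q * s)]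

theorem sq_two_mul_add_sq_two_mul_sub_one_le_one {a b c : ℝ} (hab : a + b = 1)
    (hc : c ^ 2 ≤ a * b) : (2 * c) ^ 2 + (2 * a - 1) ^ 2 ≤ 1 := by
  obtain rfl : b = 1 - a := by linarith
  nlinarith

/-- The `n = 2` case of Theorem 2: for a `2 × 2` complex matrix `B` with unit
Frobenius norm, the duality variables `x = 2|(Bᴴ B)₀₁|` and `y = 2 ∑ i |B i i|² − 1`
satisfy `x² + y² ≤ 1`. -/
theorem duality_two_path_circle (B : Matrix (Fin 2) (Fin 2) ℂ)
    (hB : ∑ i, ∑ j, ‖B i j‖ ^ 2 = 1) :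
    (2 * ‖(Bᴴ * B) 0 1‖) ^ 2 +
      (2 * (∑ i, ‖B i i‖ ^ 2) - 1) ^ 2 ≤ 1 := by
  have hdiag : ∑ i, ‖B i i‖ ^ 2 = ‖B 0 0‖ ^ 2 + ‖B 1 1‖ ^ 2 := Fin.sum_univ_two _
  have hsplit : (∑ i, ‖B i i‖ ^ 2) + (‖B 0 1‖ ^ 2 + ‖B 1 0‖ ^ 2) = 1 := by
    rw [← hB, hdiag]
    simp only [Fin.sum_univ_two]
    ring
  have hentry : ‖(Bᴴ * B) 0 1‖ ≤ ‖B 0 0‖ * ‖B 0 1‖ + ‖B 1 0‖ * ‖B 1 1‖ := by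
    simpa only [Fin.sum_univ_two] using B.norm_conjTranspose_mul_self_apply_le 0 1
  refine sq_two_mul_add_sq_two_mul_sub_one_le_one hsplit ?_
  rw [hdiag]
  calc ‖(Bᴴ * B) 0 1‖ ^ 2
      ≤ (‖B 0 0‖ * ‖B 0 1‖ + ‖B 1 0‖ * ‖B 1 1‖) ^ 2 := by gcongr
    _ ≤ (‖B 0 0‖ ^ 2 + ‖B 1 1‖ ^ 2) * (‖B 0 1‖ ^ 2 + ‖B 1 0‖ ^ 2) :=
      sq_mul_add_mul_le_mul _ _ _ _
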